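/- arXiv:2001.02841 — 2 statements merged into one kernel-verified Lean document; each statement's English description precedes it below -/
import Mathlib

section
/- Let G = ((U,V), E) be a finite bipartite graph. Run the greedy algorithm: at each step remove a node v ∈ V of minimum degree in the current induced subgraph together with all its neighbors in U and incident edges. Let a be a path (ordering of V) generated by this algorithm with step degrees (d̄_{k,a}), and let b be any ordering of V with step degrees (d̄_{k,b}) defined analogously (degree of the k-th removed node at the time of its removal). Then max_k d̄_{k,a} ≤ max_k d̄_{k,b}. -/
open Finset

/-- In a finite bipartite graph with parts `U` and `V` (adjacency `adj : U → V → Prop`),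
given an ordering `b : Fin N ≃ V` of the nodes of `V`, the *step degree* of a node `v`
at step `k` is its number of neighbors in `U` that are not adjacent to any of the
previously removed nodes `b j`, `j < k` (removing a `V`-node removes its `U`-neighbors). -/
noncomputable def stepDeg {U V : Type*} [Fintype U] {N : ℕ}
    (adj : U → V → Prop) (b : Fin N → V) (k : Fin N) (v : V) : ℕ :=
  letI := Classical.decPred fun u : U => adj u v ∧ ∀ j < k, ¬ adj u (b j)
  (Finset.univ.filter fun u : U => adj u v ∧ ∀ j < k, ¬ adj u (b j)).card

/-- An ordering of `V` is *admissible* (generated by the greedy algorithm) if at each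
step `k`, the removed node `b k` has minimum step degree among the remaining nodes
`b l`, `l ≥ k`. -/
def Admissible {U V : Type*} [Fintype U] {N : ℕ}
    (adj : U → V → Prop) (b : Fin N ≃ V) : Prop :=
  ∀ k l : Fin N, k ≤ l → stepDeg adj b k (b k) ≤ stepDeg adj b k (b l)

/-- Greediness: if `a` is an ordering of `V` generated by the greedy minimum-degree
elimination algorithm and `b` is any ordering of `V`, then the maximum least degree of
`a` is at most that of `b`: `max_k d̄_{k,a} ≤ max_k d̄_{k,b}`. -/
theorem maxLeastDegree_admissible_le {U V : Type*} [Fintype U] [Fintype V] {N : ℕ}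
    (hN : Fintype.card V = N)
    (adj : U → V → Prop)
    (a b : Fin N ≃ V) (ha : Admissible adj a) :
    (Finset.univ.sup fun k : Fin N => stepDeg adj a k (a k))
      ≤ Finset.univ.sup fun k : Fin N => stepDeg adj b k (b k) := by
  classical
  apply Finset.sup_le
  intro k _
  -- the set of b-steps that remove a vertex not yet removed by a before step k
  set s : Finset (Fin N) := univ.filter (fun m => k ≤ a.symm (b m)) with hs
  have hsne : s.Nonempty := by
    refine ⟨b.symm (a k), ?_⟩
    simp [hs]
  set m : Fin N := s.min' hsne with hm
  have hmmem : k ≤ a.symm (b m) := by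
    have := s.min'_mem hsne
    simpa [hs] using this
  have hprev : ∀ j < m, a.symm (b j) < k := by
    intro j hj
    by_contra h
    push_neg at h
    have : m ≤ j := s.min'_le j (by simp [hs, h])
    exact absurd hj (not_lt.mpr this)
  have h1 : stepDeg adj a k (a k) ≤ stepDeg adj a k (b m) := by
    have := ha k (a.symm (b m)) hmmem
    simpa using this
  have h2 : stepDeg adj a k (b m) ≤ stepDeg adj b m (b m) := by
    unfold stepDeg
    apply Finset.card_le_card
    intro u hu
    simp only [Finset.mem_filter, Finset.mem_univ, true_and] at hu ⊢
    refine ⟨hu.1, fun j hj hadj => ?_⟩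
    have hlt := hprev j hj
    exact hu.2 (a.symm (b j)) hlt (by simpa using hadj)
  calc stepDeg adj a k (a k) ≤ stepDeg adj b m (b m) := h1.trans h2
    _ ≤ _ := Finset.le_sup (f := fun k : Fin N => stepDeg adj b k (b k)) (Finset.mem_univ m)
end

section
/- Any two orderings of V generated by the greedy minimum-degree elimination algorithm on a finite bipartite graph G have the same maximum least degree d* = max_k d̄_k. -/
open Finset

lemma stepDeg_le_sup_aux {U V : Type*} [Fintype U] {N : ℕ}
    (adj : U → V → Prop)
    (a b : Fin N ≃ V) (ha : Admissible adj a) (k : Fin N) :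
    stepDeg adj a k (a k) ≤ Finset.univ.sup fun m : Fin N => stepDeg adj b m (b m) := by
  classical
  set T : Finset (Fin N) := univ.filter fun j => k ≤ a.symm (b j) with hTdef
  have hT : T.Nonempty := ⟨b.symm (a k), by simp [hTdef]⟩
  set m := T.min' hT with hmdef
  have hm : k ≤ a.symm (b m) := (mem_filter.mp (T.min'_mem hT)).2
  have h1 : stepDeg adj a k (a k) ≤ stepDeg adj a k (b m) := by
    have := ha k (a.symm (b m)) hm
    simpa using this
  have h2 : stepDeg adj a k (b m) ≤ stepDeg adj b m (b m) := by
    unfold stepDeg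
    apply Finset.card_le_card
    intro u hu
    simp only [mem_filter, mem_univ, true_and] at hu ⊢
    refine ⟨hu.1, fun j hj => ?_⟩
    have hj' : ¬ k ≤ a.symm (b j) := by
      intro h
      have : m ≤ j := T.min'_le j (by simp [hTdef, h])
      exact absurd hj (not_lt.mpr this)
    have := hu.2 (a.symm (b j)) (lt_of_not_ge hj')
    simpa using this
  exact le_trans h1 (le_trans h2 (Finset.le_sup (f := fun m : Fin N => stepDeg adj b m (b m)) (mem_univ m)))

/-- Consistency: any two orderings of `V` generated by the greedy minimum-degree
elimination algorithm have the same maximum least degree `d* = max_k d̄_k`. -/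
theorem maxLeastDegree_admissible_eq {U V : Type*} [Fintype U] [Fintype V] {N : ℕ}
    (hN : Fintype.card V = N)
    (adj : U → V → Prop)
    (a b : Fin N ≃ V) (ha : Admissible adj a) (hb : Admissible adj b) :
    (Finset.univ.sup fun k : Fin N => stepDeg adj a k (a k))
      = Finset.univ.sup fun k : Fin N => stepDeg adj b k (b k) := by
  exact le_antisymm (Finset.sup_le fun k _ => stepDeg_le_sup_aux adj a b ha k)
    (Finset.sup_le fun k _ => stepDeg_le_sup_aux adj b a hb k)
end
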